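/- For the oscillator algebra 𝔤₁(λ) with the bi-invariant-type Lorentzian metric g₀ (g(P,P)=g(Q,Q)=0, g(P,Q)=1, g(X,X)=g(Y,Y)=1), the Ricci operator satisfies Ric = 0·Id + D where D is the derivation with D(Q)=(1/2)P and D(P)=D(X)=D(Y)=0; hence g₀ is a steady algebraic Ricci soliton which is not Ricci-flat (Rc(Q,Q)=1/2 ≠ 0). -/
import Mathlib


noncomputable section

/-- The underlying space of the oscillator algebra `𝔤₁(λ)`,
with basis `P = oe 0`, `X = oe 1`, `Y = oe 2`, `Q = oe 3`. -/
abbrev V4 : Type := Fin 4 → ℝ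

def oe (i : Fin 4) : V4 := Pi.single i 1

/-- Brackets of `𝔤₁(λ)`: `[X,Y] = P`, `[Q,X] = λY`, `[Q,Y] = −λX`. -/
def br (l : ℝ) (x y : V4) : V4 := fun i =>
  if i = 0 then x 1 * y 2 - x 2 * y 1
  else if i = 1 then -l * (x 3 * y 2 - x 2 * y 3)
  else if i = 2 then l * (x 3 * y 1 - x 1 * y 3)
  else 0

/-- The metric `g_ε`: `g(P,P) = g(Q,Q) = ε`, `g(P,Q) = 1`, `g(X,X) = g(Y,Y) = 1`. -/
def gOsc (e : ℝ) (x y : V4) : ℝ :=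
  e * (x 0 * y 0) + e * (x 3 * y 3) + x 0 * y 3 + x 3 * y 0 + x 1 * y 1 + x 2 * y 2

/-- `D` is a derivation of the bracket of `𝔤₁(λ)`. -/
def IsDer (l : ℝ) (D : V4 →ₗ[ℝ] V4) : Prop :=
  ∀ x y : V4, D (br l x y) = br l (D x) y + br l x (D y)

/-- Koszul formula for the left-invariant Levi-Civita connection of `g_ε`. -/
def Koszul (l e : ℝ) (nab : V4 →ₗ[ℝ] V4 →ₗ[ℝ] V4) : Prop :=
  ∀ x y z : V4, 2 * gOsc e (nab x y) z =
    gOsc e (br l x y) z - gOsc e (br l y z) x + gOsc e (br l z x) y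

/-- Curvature tensor `R(X,Y)Z = ∇_X∇_Y Z − ∇_Y∇_X Z − ∇_{[X,Y]}Z`. -/
def Rcurv (l : ℝ) (nab : V4 →ₗ[ℝ] V4 →ₗ[ℝ] V4) (x y z : V4) : V4 :=
  nab x (nab y z) - nab y (nab x z) - nab (br l x y) z

/-- Ricci tensor `Rc(X,Y) = tr (Z ↦ R(Z,X)Y)`, as a coordinate trace over the
standard basis. -/
def Rc (l : ℝ) (nab : V4 →ₗ[ℝ] V4 →ₗ[ℝ] V4) (x y : V4) : ℝ :=
  ∑ i : Fin 4, (Rcurv l nab (oe i) x y) i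


/-- Explicit Levi-Civita connection of `g₀` on `𝔤₁(λ)`. -/
def Fc (l : ℝ) (x y : V4) : V4 := fun i =>
  if i = 0 then (x 1 * y 2 - x 2 * y 1) / 2
  else if i = 1 then x 2 * y 3 / 2 + (1 / 2 - l) * x 3 * y 2
  else if i = 2 then -(x 1 * y 3) / 2 + (l - 1 / 2) * x 3 * y 1
  else 0

/-- The derivation `D`. -/
def Dmap : V4 →ₗ[ℝ] V4 where
  toFun x := fun i => if i = 0 then x 3 / 2 else 0
  map_add' x y := by
    funext i
    by_cases h : i = 0 <;> simp [h, Pi.add_apply] <;> ring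
  map_smul' c x := by
    funext i
    by_cases h : i = 0 <;> simp [h] <;> ring

lemma gOsc_nondeg {v w : V4} (h : ∀ z : V4, gOsc 0 v z = gOsc 0 w z) : v = w := by
  have h0 := h (oe 3)
  have h1 := h (oe 1)
  have h2 := h (oe 2)
  have h3 := h (oe 0)
  simp [gOsc, oe, Pi.single_apply] at h0 h1 h2 h3
  funext i
  fin_cases i
  · simpa using h0
  · simpa using h1
  · simpa using h2
  · simpa using h3

set_option maxHeartbeats 1000000 in
/-- for the oscillator algebra `𝔤₁(λ)`, `λ > 0`, with the bi-invariant
type Lorentzian metric `g₀` (`ε = 0`), the Ricci operator satisfies `Ric = 0·Id + D`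
where `D` is the derivation with `D Q = (1/2)P`, `D P = D X = D Y = 0`; hence `g₀` is
a steady algebraic Ricci soliton which is not Ricci-flat (`Rc(Q,Q) = 1/2 ≠ 0`). -/
theorem oscillator_steady_soliton (l : ℝ) (hl : 0 < l)
    (nab : V4 →ₗ[ℝ] V4 →ₗ[ℝ] V4) (hK : Koszul l 0 nab)
    (Ric : V4 →ₗ[ℝ] V4) (hRic : ∀ x y : V4, gOsc 0 (Ric x) y = Rc l nab x y) :
    ∃ D : V4 →ₗ[ℝ] V4, IsDer l D ∧
      D (oe 3) = (1 / 2 : ℝ) • oe 0 ∧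
      D (oe 0) = 0 ∧ D (oe 1) = 0 ∧ D (oe 2) = 0 ∧
      (∀ x : V4, Ric x = (0 : ℝ) • x + D x) ∧
      Rc l nab (oe 3) (oe 3) = 1 / 2 ∧ ¬(∀ x y : V4, Rc l nab x y = 0) := by
  have hnab : ∀ x y : V4, nab x y = Fc l x y := by
    intro x y
    apply gOsc_nondeg
    intro z
    have h := hK x y z
    have h2 : 2 * gOsc 0 (Fc l x y) z =
        gOsc 0 (br l x y) z - gOsc 0 (br l y z) x + gOsc 0 (br l z x) y := by
      simp [gOsc, Fc, br]
      ring
    linarith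
  have hRc : ∀ x y : V4, Rc l nab x y = x 3 * y 3 / 2 := by
    intro x y
    simp only [Rc, Rcurv, hnab, Fin.sum_univ_four, Pi.sub_apply]
    simp [Fc, br, oe, Pi.single_apply]
    ring
  refine ⟨Dmap, ?_, ?_, ?_, ?_, ?_, ?_, ?_, ?_⟩
  · intro x y
    funext i
    fin_cases i <;>
      simp [Dmap, br, Pi.add_apply] <;> ring
  · funext i
    fin_cases i <;> simp [Dmap, oe, Pi.single_apply]
  · funext i
    fin_cases i <;> simp [Dmap, oe, Pi.single_apply]
  · funext i
    fin_cases i <;> simp [Dmap, oe, Pi.single_apply]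
  · funext i
    fin_cases i <;> simp [Dmap, oe, Pi.single_apply]
  · intro x
    rw [zero_smul, zero_add]
    apply gOsc_nondeg
    intro z
    rw [hRic, hRc]
    simp [Dmap, gOsc]
    ring
  · rw [hRc]
    simp [oe, Pi.single_apply]
  · intro h
    have := h (oe 3) (oe 3)
    rw [hRc] at this
    simp [oe, Pi.single_apply] at this
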